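/- Suppose ℓ₁ ≤ ℓ₂ are positive integers and p ∈ (0,1). Let H(Bin(ℓ,p)) denote the Shannon entropy of the Binomial(ℓ,p) distribution. Then H(Bin(ℓ₂,p)) - H(Bin(ℓ₂ - 1, p)) ≤ H(Bin(ℓ₁,p)) - H(Bin(ℓ₁ - 1, p)); i.e., the entropy increments of binomial distributions are nonincreasing in ℓ. -/

import Mathlib

/-!
Let `η(x) = -x log x`, `X ~ q` on `ℕ` and `B ~ Bernoulli p` independent. Then
`H(X + B) = H(X) + H(B) - H(B | X + B)`, and `H(B | X + B)` is a sum over `j` of values of the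
perspective `(a, b) ↦ b η(a / b)` of `η` at `((1-p) q j, P(X+B=j))` and `(p q (j-1), P(X+B=j))`.
This perspective is jointly concave, so the summands of `H(B' | X + B + B')` dominate the
Bernoulli-smoothed summands of `H(B | X + B)`, and summing gives
`H(B | X + B) ≤ H(B' | X + B + B')`. Hence the increments of `k ↦ H(X + B₁ + ⋯ + Bₖ)` are
nonincreasing; take `X ~ Bin(n, p)`, as `Bin(n + 1, p) = Bin(n, p) * Bernoulli p`.
-/

open Finset Real

noncomputable def binPMF (ℓ : ℕ) (p : ℝ) (i : ℕ) : ℝ :=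
  (Nat.choose ℓ i : ℝ) * p ^ i * (1 - p) ^ (ℓ - i)

/-- Shannon entropy (base 2) of the `Bin(ℓ,p)` distribution. -/
noncomputable def binH (ℓ : ℕ) (p : ℝ) : ℝ :=
  -∑ i ∈ Finset.range (ℓ + 1), binPMF ℓ p i * Real.logb 2 (binPMF ℓ p i)

noncomputable def perspNegMulLog (z : ℝ × ℝ) : ℝ := z.2 * negMulLog (z.1 / z.2)

lemma perspNegMulLog_smul {t : ℝ} (ht : 0 ≤ t) (z : ℝ × ℝ) :
    perspNegMulLog (t • z) = t * perspNegMulLog z := by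
  rcases ht.eq_or_lt with rfl | ht
  · simp [perspNegMulLog]
  · simp only [perspNegMulLog, Prod.smul_fst, Prod.smul_snd, smul_eq_mul,
      mul_div_mul_left _ _ ht.ne']
    ring

lemma perspNegMulLog_add_le {z w : ℝ × ℝ} (hz : 0 ≤ z.1 ∧ z.1 ≤ z.2)
    (hw : 0 ≤ w.1 ∧ w.1 ≤ w.2) :
    perspNegMulLog z + perspNegMulLog w ≤ perspNegMulLog (z + w) := by
  obtain ⟨a₁, b₁⟩ := z
  obtain ⟨a₂, b₂⟩ := w
  obtain ⟨ha₁, hab₁⟩ := hz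
  obtain ⟨ha₂, hab₂⟩ := hw
  simp only [perspNegMulLog, Prod.mk_add_mk] at *
  rcases (add_nonneg (ha₁.trans hab₁) (ha₂.trans hab₂)).eq_or_lt with hB | hB
  · obtain rfl : b₁ = 0 := by linarith
    obtain rfl : b₂ = 0 := by linarith
    simp
  have weight : ∀ a b, 0 ≤ a → a ≤ b → b / (b₁ + b₂) * (a / b) = a / (b₁ + b₂) := by
    intro a b ha hab
    rcases (ha.trans hab).eq_or_lt with rfl | hb
    · simp [le_antisymm hab ha]
    · field_simp
  have jensen := concaveOn_negMulLog.2 (x := a₁ / b₁) (y := a₂ / b₂)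
    (div_nonneg ha₁ (ha₁.trans hab₁)) (div_nonneg ha₂ (ha₂.trans hab₂))
    (div_nonneg (ha₁.trans hab₁) hB.le) (div_nonneg (ha₂.trans hab₂) hB.le)
    (by field_simp)
  simp only [smul_eq_mul, weight a₁ b₁ ha₁ hab₁, weight a₂ b₂ ha₂ hab₂, ← add_div] at jensen
  calc b₁ * negMulLog (a₁ / b₁) + b₂ * negMulLog (a₂ / b₂)
      = (b₁ + b₂) * (b₁ / (b₁ + b₂) * negMulLog (a₁ / b₁)
          + b₂ / (b₁ + b₂) * negMulLog (a₂ / b₂)) := by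
        field_simp
    _ ≤ (b₁ + b₂) * negMulLog ((a₁ + a₂) / (b₁ + b₂)) := by gcongr

lemma concaveOn_perspNegMulLog :
    ConcaveOn ℝ {z : ℝ × ℝ | 0 ≤ z.1 ∧ z.1 ≤ z.2} perspNegMulLog := by
  have mem_smul : ∀ {t : ℝ} {z : ℝ × ℝ}, 0 ≤ t → 0 ≤ z.1 ∧ z.1 ≤ z.2 →
      0 ≤ (t • z).1 ∧ (t • z).1 ≤ (t • z).2 := fun ht hz =>
    ⟨mul_nonneg ht hz.1, mul_le_mul_of_nonneg_left hz.2 ht⟩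
  refine ⟨fun z hz w hw s t hs ht _ => ?_, fun z hz w hw s t hs ht _ => ?_⟩
  · obtain ⟨h₁, h₂⟩ := mem_smul hs hz
    obtain ⟨h₃, h₄⟩ := mem_smul ht hw
    exact ⟨add_nonneg h₁ h₃, add_le_add h₂ h₄⟩
  · simp only [smul_eq_mul, ← perspNegMulLog_smul hs, ← perspNegMulLog_smul ht]
    exact perspNegMulLog_add_le (mem_smul hs hz) (mem_smul ht hw)

def seqShift (q : ℕ → ℝ) : ℕ → ℝ
  | 0 => 0
  | k + 1 => q k

lemma sum_range_succ_seqShift (q : ℕ → ℝ) (n : ℕ) :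
    ∑ j ∈ range (n + 1), seqShift q j = ∑ k ∈ range n, q k := by
  simp [sum_range_succ', seqShift]

/-- The law of `X + B` for `X ~ q` and an independent `B ~ Bernoulli p`. -/
noncomputable def bernConv (p : ℝ) (q : ℕ → ℝ) (j : ℕ) : ℝ :=
  (1 - p) * q j + p * seqShift q j

section BernConv

variable {p : ℝ} {q : ℕ → ℝ}

lemma seqShift_bernConv : seqShift (bernConv p q) = bernConv p (seqShift q) := by
  funext j
  cases j <;> simp [seqShift, bernConv]

lemma seqShift_nonneg (hq : ∀ i, 0 ≤ q i) (j : ℕ) : 0 ≤ seqShift q j := by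
  cases j
  exacts [le_rfl, hq _]

lemma one_sub_mul_le_bernConv (hp0 : 0 ≤ p) (hq : ∀ i, 0 ≤ q i) (j : ℕ) :
    (1 - p) * q j ≤ bernConv p q j :=
  le_add_of_nonneg_right (mul_nonneg hp0 (seqShift_nonneg hq j))

lemma mul_seqShift_le_bernConv (hp1 : p ≤ 1) (hq : ∀ i, 0 ≤ q i) (j : ℕ) :
    p * seqShift q j ≤ bernConv p q j :=
  le_add_of_nonneg_left (mul_nonneg (sub_nonneg.2 hp1) (hq j))

lemma bernConv_nonneg (hp0 : 0 ≤ p) (hp1 : p ≤ 1) (hq : ∀ i, 0 ≤ q i) (j : ℕ) :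
    0 ≤ bernConv p q j :=
  (mul_nonneg hp0 (seqShift_nonneg hq j)).trans (mul_seqShift_le_bernConv hp1 hq j)

lemma bernConv_eq_zero {N : ℕ} (hN : ∀ i, N ≤ i → q i = 0) {j : ℕ} (hj : N + 1 ≤ j) :
    bernConv p q j = 0 := by
  obtain ⟨k, rfl⟩ : ∃ k, j = k + 1 := ⟨j - 1, by omega⟩
  simp [bernConv, seqShift, hN k (by omega), hN (k + 1) (by omega)]

lemma sum_range_bernConv {N : ℕ} (hqN : q N = 0) :
    ∑ j ∈ range (N + 1), bernConv p q j = ∑ k ∈ range N, q k := by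
  simp only [bernConv, sum_add_distrib, ← mul_sum, sum_range_succ_seqShift,
    sum_range_succ q, hqN]
  ring

end BernConv

noncomputable def seqEntropy (q : ℕ → ℝ) (n : ℕ) : ℝ := ∑ i ∈ range n, negMulLog (q i)

/-- `P(X + B = j) · H(B | X + B = j)` for `X ~ q` and an independent `B ~ Bernoulli p`. -/
noncomputable def bernCondTerm (p : ℝ) (q : ℕ → ℝ) (j : ℕ) : ℝ :=
  perspNegMulLog ((1 - p) * q j, bernConv p q j)
    + perspNegMulLog (p * seqShift q j, bernConv p q j)

lemma perspNegMulLog_add_perspNegMulLog {a₁ a₂ : ℝ} (ha₁ : 0 ≤ a₁) (ha₂ : 0 ≤ a₂) :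
    perspNegMulLog (a₁, a₁ + a₂) + perspNegMulLog (a₂, a₁ + a₂)
      = negMulLog a₁ + negMulLog a₂ - negMulLog (a₁ + a₂) := by
  rcases (add_nonneg ha₁ ha₂).eq_or_lt with hB | hB
  · obtain rfl : a₁ = 0 := by linarith
    obtain rfl : a₂ = 0 := by linarith
    simp [perspNegMulLog]
  have split : ∀ a, negMulLog a = (a₁ + a₂) * negMulLog (a / (a₁ + a₂))
      + a / (a₁ + a₂) * negMulLog (a₁ + a₂) := fun a => by
    rw [← negMulLog_mul, div_mul_cancel₀ _ hB.ne']
  simp only [perspNegMulLog]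
  rw [split a₁, split a₂]
  field_simp
  ring

section BernCondTerm

variable {p : ℝ} {q : ℕ → ℝ}

lemma bernCondTerm_eq (hp0 : 0 ≤ p) (hp1 : p ≤ 1) (hq : ∀ i, 0 ≤ q i) (j : ℕ) :
    bernCondTerm p q j = negMulLog ((1 - p) * q j) + negMulLog (p * seqShift q j)
      - negMulLog (bernConv p q j) :=
  perspNegMulLog_add_perspNegMulLog (mul_nonneg (sub_nonneg.2 hp1) (hq j))
    (mul_nonneg hp0 (seqShift_nonneg hq j))

lemma sum_range_bernCondTerm (hp0 : 0 ≤ p) (hp1 : p ≤ 1) (hq : ∀ i, 0 ≤ q i) {N : ℕ}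
    (hqN : q N = 0) :
    ∑ j ∈ range (N + 1), bernCondTerm p q j
      = (∑ k ∈ range N, q k) * binEntropy p + seqEntropy q N
        - seqEntropy (bernConv p q) (N + 1) := by
  have shift : ∀ j, negMulLog (p * seqShift q j) = seqShift (fun k => negMulLog (p * q k)) j := by
    intro j
    cases j <;> simp [seqShift]
  simp only [bernCondTerm_eq hp0 hp1 hq, shift, sum_sub_distrib, sum_add_distrib,
    sum_range_succ_seqShift, seqEntropy]
  rw [sum_range_succ (fun j => negMulLog ((1 - p) * q j)), hqN, mul_zero, negMulLog_zero,
    add_zero]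
  simp only [negMulLog_mul, binEntropy_eq_negMulLog_add_negMulLog_one_sub, sum_add_distrib,
    ← sum_mul, ← mul_sum]
  ring

lemma bernConv_bernCondTerm_le (hp0 : 0 ≤ p) (hp1 : p ≤ 1) (hq : ∀ i, 0 ≤ q i) (j : ℕ) :
    bernConv p (bernCondTerm p q) j ≤ bernCondTerm p (bernConv p q) j := by
  set q' := seqShift q
  have hq' : ∀ i, 0 ≤ q' i := seqShift_nonneg hq
  have shift : seqShift (bernCondTerm p q) j
      = perspNegMulLog ((1 - p) * q' j, bernConv p q' j)
        + perspNegMulLog (p * seqShift q' j, bernConv p q' j) := by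
    rw [← seqShift_bernConv]
    cases j <;> simp [q', seqShift, bernCondTerm, perspNegMulLog]
  have hp1' : 0 ≤ 1 - p := sub_nonneg.2 hp1
  have concave := concaveOn_perspNegMulLog.2
  calc bernConv p (bernCondTerm p q) j
      = ((1 - p) • perspNegMulLog ((1 - p) * q j, bernConv p q j)
          + p • perspNegMulLog ((1 - p) * q' j, bernConv p q' j))
        + ((1 - p) • perspNegMulLog (p * q' j, bernConv p q j)
          + p • perspNegMulLog (p * seqShift q' j, bernConv p q' j)) := by
        rw [bernConv, shift, bernCondTerm]
        simp only [smul_eq_mul]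
        ring
    _ ≤ perspNegMulLog ((1 - p) • ((1 - p) * q j, bernConv p q j)
          + p • ((1 - p) * q' j, bernConv p q' j))
        + perspNegMulLog ((1 - p) • (p * q' j, bernConv p q j)
          + p • (p * seqShift q' j, bernConv p q' j)) :=
        add_le_add
          (concave ⟨mul_nonneg hp1' (hq j), one_sub_mul_le_bernConv hp0 hq j⟩
            ⟨mul_nonneg hp1' (hq' j), one_sub_mul_le_bernConv hp0 hq' j⟩ hp1' hp0 (by ring))
          (concave ⟨mul_nonneg hp0 (hq' j), mul_seqShift_le_bernConv hp1 hq j⟩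
            ⟨mul_nonneg hp0 (seqShift_nonneg hq' j), mul_seqShift_le_bernConv hp1 hq' j⟩
            hp1' hp0 (by ring))
    _ = bernCondTerm p (bernConv p q) j := by
        simp only [bernCondTerm, seqShift_bernConv, Prod.smul_mk, Prod.mk_add_mk, smul_eq_mul]
        congr 2 <;> refine Prod.ext ?_ ?_ <;> simp only [bernConv, seqShift_bernConv, q'] <;> ring

lemma sum_range_bernCondTerm_le (hp0 : 0 ≤ p) (hp1 : p ≤ 1) (hq : ∀ i, 0 ≤ q i) {N : ℕ}
    (hN : ∀ i, N ≤ i → q i = 0) :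
    ∑ j ∈ range (N + 1), bernCondTerm p q j
      ≤ ∑ j ∈ range (N + 2), bernCondTerm p (bernConv p q) j := by
  have hlast : bernCondTerm p q (N + 1) = 0 := by
    simp [bernCondTerm, seqShift, hN N le_rfl, hN (N + 1) (by omega), perspNegMulLog]
  rw [← sum_range_bernConv (p := p) hlast]
  exact sum_le_sum fun j _ => bernConv_bernCondTerm_le hp0 hp1 hq j

end BernCondTerm

theorem seqEntropy_bernConv_sub_le {p : ℝ} (hp0 : 0 ≤ p) (hp1 : p ≤ 1) {q : ℕ → ℝ}
    (hq : ∀ i, 0 ≤ q i) {N : ℕ} (hN : ∀ i, N ≤ i → q i = 0) :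
    seqEntropy (bernConv p (bernConv p q)) (N + 2) - seqEntropy (bernConv p q) (N + 1)
      ≤ seqEntropy (bernConv p q) (N + 1) - seqEntropy q N := by
  have h₁ := sum_range_bernCondTerm hp0 hp1 hq (hN N le_rfl)
  have h₂ := sum_range_bernCondTerm hp0 hp1 (bernConv_nonneg hp0 hp1 hq)
    (bernConv_eq_zero hN (le_refl (N + 1)))
  rw [sum_range_bernConv (hN N le_rfl)] at h₂
  have h₃ := sum_range_bernCondTerm_le hp0 hp1 hq hN
  linarith

lemma binPMF_succ (ℓ : ℕ) (p : ℝ) : binPMF (ℓ + 1) p = bernConv p (binPMF ℓ p) := by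
  funext i
  rcases i with _ | k
  · simp only [binPMF, bernConv, seqShift, Nat.choose_zero_right, Nat.sub_zero]
    ring
  rcases lt_or_ge k ℓ with h | h
  · obtain ⟨m, rfl⟩ : ∃ m, ℓ = k + 1 + m := ⟨ℓ - (k + 1), by omega⟩
    simp only [binPMF, bernConv, seqShift, Nat.choose_succ_succ', Nat.cast_add,
      show k + 1 + m + 1 - (k + 1) = m + 1 by omega, show k + 1 + m - (k + 1) = m by omega,
      show k + 1 + m - k = m + 1 by omega]
    ring
  · simp only [binPMF, bernConv, seqShift, Nat.choose_succ_succ', Nat.cast_add,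
      Nat.choose_eq_zero_of_lt (Nat.lt_succ_of_le h), show ℓ + 1 - (k + 1) = ℓ - k by omega]
    ring

lemma binPMF_nonneg {p : ℝ} (hp0 : 0 ≤ p) (hp1 : p ≤ 1) (ℓ i : ℕ) : 0 ≤ binPMF ℓ p i := by
  have : 0 ≤ 1 - p := sub_nonneg.2 hp1
  unfold binPMF
  positivity

lemma binPMF_eq_zero {ℓ i : ℕ} (p : ℝ) (h : ℓ < i) : binPMF ℓ p i = 0 := by
  simp [binPMF, Nat.choose_eq_zero_of_lt h]

lemma binH_eq (ℓ : ℕ) (p : ℝ) : binH ℓ p = seqEntropy (binPMF ℓ p) (ℓ + 1) / log 2 := by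
  simp only [binH, seqEntropy, logb, negMulLog, sum_div, ← sum_neg_distrib]
  congr 1
  ext i
  ring

lemma antitone_binH_succ_sub {p : ℝ} (hp0 : 0 ≤ p) (hp1 : p ≤ 1) :
    Antitone fun ℓ => binH (ℓ + 1) p - binH ℓ p := by
  refine antitone_nat_of_succ_le fun n => ?_
  simp only [binH_eq, ← sub_div]
  refine div_le_div_of_nonneg_right ?_ (log_nonneg one_le_two)
  rw [binPMF_succ (n + 1), binPMF_succ n]
  exact seqEntropy_bernConv_sub_le (N := n + 1) hp0 hp1 (binPMF_nonneg hp0 hp1 n)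
    fun i hi => binPMF_eq_zero p hi

/-- The entropy increments of binomial distributions are nonincreasing in `ℓ`. -/
theorem stmt18 (ℓ₁ ℓ₂ : ℕ) (p : ℝ) (h1 : 1 ≤ ℓ₁) (h12 : ℓ₁ ≤ ℓ₂)
    (hp0 : 0 < p) (hp1 : p < 1) :
    binH ℓ₂ p - binH (ℓ₂ - 1) p ≤ binH ℓ₁ p - binH (ℓ₁ - 1) p := by
  obtain ⟨m₁, rfl⟩ : ∃ m, ℓ₁ = m + 1 := ⟨ℓ₁ - 1, by omega⟩
  obtain ⟨m₂, rfl⟩ : ∃ m, ℓ₂ = m + 1 := ⟨ℓ₂ - 1, by omega⟩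
  simpa using antitone_binH_succ_sub hp0.le hp1.le (by omega : m₁ ≤ m₂)
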